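/- Let n ≥ 3. Then Σ_{h ∈ ℤ/nℤ} Σ_{k ∈ ℤ/nℤ} |{π a permutation of ℤ/nℤ : π(i) + π(i − h) = k for all i}| equals 0 if n is odd, and equals (n/2)·(n/2)!·2^{n/2} if n is even. -/
import Mathlib



open Equiv Finset

-- basic ZMod facts
section basics
variable {n m : ℕ} [NeZero n]

lemma valM (hnm : n = 2*m) (hm : 0 < m) : ((m:ℕ) : ZMod n).val = m :=
  ZMod.val_cast_of_lt (by omega)

lemma MM (hnm : n = 2*m) : ((m:ℕ) : ZMod n) + (m:ℕ) = 0 := by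
  rw [← Nat.cast_add, show m + m = n by omega, ZMod.natCast_self]

lemma sub_M (hnm : n = 2*m) (i : ZMod n) : i - (m:ℕ) = i + (m:ℕ) := by
  rw [sub_eq_add_neg, neg_eq_of_add_eq_zero_right (MM hnm)]

lemma val_add_M (hnm : n = 2*m) (hm : 0 < m) (i : ZMod n) :
    (i + (m:ℕ)).val = if i.val < m then i.val + m else i.val - m := by
  have h1 := ZMod.val_lt i
  rw [ZMod.val_add, valM hnm hm]
  split
  · rw [Nat.mod_eq_of_lt (by omega)]
  · rw [Nat.mod_eq_sub_mod (by omega), Nat.mod_eq_of_lt (by omega)]; omega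

end basics

section count
variable {n m : ℕ} [NeZero n]

def E1 (hnm : n = 2*m) (hm : 0 < m) : ZMod n ≃ Fin m × Bool where
  toFun i := if h : i.val < m then (⟨i.val, h⟩, false)
             else (⟨i.val - m, by have := ZMod.val_lt i; omega⟩, true)
  invFun p := if p.2 then ((p.1 : ℕ) : ZMod n) + (m:ℕ) else ((p.1 : ℕ) : ZMod n)
  left_inv i := by
    by_cases h : i.val < m
    · simp [h, ZMod.natCast_zmod_val]
    · simp only [h, dif_neg, not_false_iff, if_true]
      rw [← Nat.cast_add, Nat.sub_add_cancel (by omega), ZMod.natCast_zmod_val]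
  right_inv p := by
    obtain ⟨a, ε⟩ := p
    have ha : ((a : ℕ) : ZMod n).val = a := ZMod.val_cast_of_lt (by omega)
    cases ε
    · simp [ha, a.isLt]
    · have h2 : (((a:ℕ) : ZMod n) + (m:ℕ)).val = a + m := by
        rw [val_add_M hnm hm, ha, if_pos a.isLt]
      simp [h2]

lemma E1_add (hnm : n = 2*m) (hm : 0 < m) (i : ZMod n) :
    E1 hnm hm (i + (m:ℕ)) = ((E1 hnm hm i).1, !(E1 hnm hm i).2) := by
  have h1 := ZMod.val_lt i
  have h2 := val_add_M hnm hm i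
  by_cases h : i.val < m
  · rw [if_pos h] at h2
    simp only [E1, Equiv.coe_fn_mk, dif_pos h, h2]
    rw [dif_neg (by omega)]
    simp
  · rw [if_neg h] at h2
    simp only [E1, Equiv.coe_fn_mk, dif_neg h, h2]
    rw [dif_pos (by omega)]
    simp

end count

section count2
variable {n m : ℕ} [NeZero n] {k : ZMod n}

lemma valne (hk : ∀ x : ZMod n, x + x ≠ k) (y : ZMod n) : y.val ≠ (k - y).val := by
  intro h
  have : y = k - y := ZMod.val_injective n h
  exact hk y (by nth_rewrite 2 [this]; ring)

def E2 (hk : ∀ x : ZMod n, x + x ≠ k) :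
    {x : ZMod n // x.val < (k - x).val} × Bool ≃ ZMod n where
  toFun p := if p.2 then k - p.1 else (p.1 : ZMod n)
  invFun y := if h : y.val < (k - y).val then (⟨y, h⟩, false)
    else (⟨k - y, by
      have h2 := valne hk y
      have h3 : k - (k - y) = y := by ring
      rw [h3]; omega⟩, true)
  left_inv p := by
    obtain ⟨⟨x, hx⟩, ε⟩ := p
    cases ε
    · simp only [if_false, Bool.false_eq_true]
      rw [dif_pos hx]
    · simp only [if_true]
      have h3 : k - (k - x) = x := by ring
      rw [dif_neg (by rw [h3]; omega)]
      simp [h3]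
  right_inv y := by
    beta_reduce
    by_cases h : y.val < (k - y).val
    · rw [dif_pos h]; simp
    · rw [dif_neg h]
      simp only [if_true]
      ring

lemma E2_key (hk : ∀ x : ZMod n, x + x ≠ k) (x) (ε : Bool) :
    E2 hk (x, ε) + E2 hk (x, !ε) = k := by
  cases ε <;> simp [E2] <;> ring

lemma cardR (hnm : n = 2*m) (hk : ∀ x : ZMod n, x + x ≠ k) :
    Fintype.card {x : ZMod n // x.val < (k - x).val} = m := by
  have e : {x : ZMod n // x.val < (k - x).val} ≃ {x : ZMod n // ¬ (x.val < (k - x).val)} :=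
    { toFun := fun x => ⟨k - x.1, by
        have h3 : k - (k - x.1) = x.1 := by ring
        rw [h3]; have := x.2; omega⟩
      invFun := fun y => ⟨k - y.1, by
        have h3 : k - (k - y.1) = y.1 := by ring
        rw [h3]; have := y.2; have := valne hk y.1; omega⟩
      left_inv := fun x => by ext; simp
      right_inv := fun y => by ext; simp }
  have h1 := Fintype.card_eq.mpr ⟨e⟩
  have h2 : Fintype.card {x : ZMod n // ¬ (x.val < (k - x).val)}
      = Fintype.card (ZMod n) - Fintype.card {x : ZMod n // x.val < (k - x).val} :=
    Fintype.card_subtype_compl _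
  have h3 : Fintype.card (ZMod n) = n := ZMod.card n
  have h4 : Fintype.card {x : ZMod n // x.val < (k - x).val} ≤ Fintype.card (ZMod n) :=
    Fintype.card_subtype_le _
  omega

end count2

lemma E2_flip {n : ℕ} [NeZero n] {k : ZMod n} (hk : ∀ x : ZMod n, x + x ≠ k)
    (x) (ε : Bool) : E2 hk (x, !ε) = k - E2 hk (x, ε) :=
  eq_sub_of_add_eq' (E2_key hk x ε)

lemma count_good {n m : ℕ} [NeZero n] (hm : 2 ≤ m) (hnm : n = 2*m) (k : ZMod n)
    (hk : ∀ x : ZMod n, x + x ≠ k) :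
    Nat.card {π : Equiv.Perm (ZMod n) // ∀ i, π i + π (i - (m:ℕ)) = k}
      = m.factorial * 2 ^ m := by
  have hm0 : 0 < m := by omega
  set R := {x : ZMod n // x.val < (k - x).val} with hR
  let e1 := E1 (n := n) hnm hm0
  let e2 := E2 hk
  let xorE : Bool → Bool ≃ Bool := fun c =>
    ⟨fun b => xor c b, fun b => xor c b, fun b => by simp, fun b => by simp⟩
  let ψ : ((Fin m ≃ R) × (Fin m → Bool)) →
      {π : Equiv.Perm (ZMod n) // ∀ i, π i + π (i - (m:ℕ)) = k} := fun fb =>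
    ⟨e1.trans ((Equiv.prodShear fb.1 (fun a => xorE (fb.2 a))).trans e2), by
      intro i
      rw [sub_M hnm]
      have h1 : e1 (i + (m:ℕ)) = ((e1 i).1, !(e1 i).2) := E1_add hnm hm0 i
      show e2 (Equiv.prodShear fb.1 (fun a => xorE (fb.2 a)) (e1 i))
        + e2 (Equiv.prodShear fb.1 (fun a => xorE (fb.2 a)) (e1 (i + (m:ℕ)))) = k
      rw [h1]
      show e2 (fb.1 (e1 i).1, xor (fb.2 (e1 i).1) (e1 i).2)
        + e2 (fb.1 (e1 i).1, xor (fb.2 (e1 i).1) (!(e1 i).2)) = k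
      rw [Bool.xor_not]
      exact E2_key hk _ _⟩
  have hψ : ∀ fb (a : Fin m) (ε : Bool),
      (ψ fb).1 (e1.symm (a, ε)) = e2 (fb.1 a, xor (fb.2 a) ε) := by
    intro fb a ε
    show e2 (Equiv.prodShear fb.1 (fun a => xorE (fb.2 a)) (e1 (e1.symm (a, ε)))) = _
    rw [e1.apply_symm_apply]
    rfl
  have hbij : Function.Bijective ψ := by
    constructor
    · rintro ⟨f, b⟩ ⟨f', b'⟩ hfb
      have key : ∀ a : Fin m, f a = f' a ∧ b a = b' a := by
        intro a
        have h1 := congrArg (fun p => p.1 (e1.symm (a, false))) hfb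
        simp only [hψ] at h1
        have h2 := e2.injective h1
        simpa [xorE] using h2
      have hf : f = f' := Equiv.ext fun a => (key a).1
      have hb : b = b' := funext fun a => (key a).2
      rw [Prod.mk.injEq]; exact ⟨hf, hb⟩
    · rintro ⟨π, hπ⟩
      have hπ' : ∀ i, π (i + (m:ℕ)) = k - π i := by
        intro i
        have := hπ i
        rw [sub_M hnm] at this
        exact eq_sub_of_add_eq' this
      set y : Fin m → ZMod n := fun a => π (((a:ℕ) : ZMod n)) with hy
      set g : Fin m → R := fun a => (e2.symm (y a)).1 with hg
      set b : Fin m → Bool := fun a => (e2.symm (y a)).2 with hb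
      have hgb : ∀ a, e2 (g a, b a) = y a := fun a => by
        rw [hg, hb]; exact e2.apply_symm_apply (y a)
      have hrep : ∀ a : Fin m, (((a:ℕ):ZMod n)).val = (a:ℕ) :=
        fun a => ZMod.val_cast_of_lt (by omega)
      have hcast_inj : ∀ a a' : Fin m, ((a:ℕ):ZMod n) = ((a':ℕ):ZMod n) → a = a' := by
        intro a a' h
        have := congrArg ZMod.val h
        rw [hrep, hrep] at this
        exact Fin.ext this
      have hginj : Function.Injective g := by
        intro a a' h
        have hcase : y a = y a' ∨ y a = k - y a' := by
          rcases Bool.eq_or_eq_not (b a) (b a') with hbb | hbb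
          · left; rw [← hgb a, ← hgb a', h, hbb]
          · right; rw [← hgb a, ← hgb a', h, hbb, E2_flip]
        rcases hcase with hc | hc
        · exact hcast_inj a a' (π.injective hc)
        · exfalso
          rw [← hπ' ((a':ℕ):ZMod n)] at hc
          have h2 := π.injective hc
          have h3 := congrArg ZMod.val h2
          rw [hrep, val_add_M hnm hm0, hrep, if_pos (a'.isLt)] at h3
          omega
      have hgbij : Function.Bijective g :=
        (Fintype.bijective_iff_injective_and_card g).mpr
          ⟨hginj, by rw [Fintype.card_fin, cardR hnm hk]⟩
      refine ⟨(Equiv.ofBijective g hgbij, b), ?_⟩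
      apply Subtype.ext
      apply Equiv.ext
      intro i
      rcases he : e1 i with ⟨a, ε⟩
      have hi : i = e1.symm (a, ε) := by rw [← he, e1.symm_apply_apply]
      have hsymm : e1.symm (a, ε) = if ε then ((a:ℕ):ZMod n) + (m:ℕ) else ((a:ℕ):ZMod n) := rfl
      rw [hi, hψ]
      show e2 (g a, xor (b a) ε) = π (e1.symm (a, ε))
      rw [hsymm]
      cases ε
      · simp only [Bool.xor_false, if_false, Bool.false_eq_true]
        rw [hgb]
      · simp only [Bool.xor_true, if_true]
        rw [E2_flip, hgb, hπ']
  rw [← Nat.card_eq_of_bijective ψ hbij]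
  rw [Nat.card_eq_fintype_card, Fintype.card_prod,
    Fintype.card_equiv ((Fintype.equivFinOfCardEq (cardR hnm hk)).symm),
    Fintype.card_fin]
  simp [Fintype.card_fun]

lemma nonempty_imp {n : ℕ} [NeZero n] (hn : 3 ≤ n) (h k : ZMod n)
    (π : Equiv.Perm (ZMod n)) (hπ : ∀ i, π i + π (i - h) = k) :
    h + h = 0 ∧ h ≠ 0 := by
  constructor
  · have h2 : π ((0:ZMod n) - h - h) = π 0 := by
      have e1 := hπ (0 : ZMod n)
      have e2 := hπ ((0:ZMod n) - h)
      have h3 : π (0:ZMod n) + π ((0:ZMod n) - h)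
          = π ((0:ZMod n) - h - h) + π ((0:ZMod n) - h) := by
        rw [e1, add_comm]; exact e2.symm
      exact (add_right_cancel h3).symm
    have h3 := π.injective h2
    have h4 : (0:ZMod n) - (h + h) = 0 := by rw [← sub_sub]; exact h3
    exact sub_eq_self.mp h4
  · intro h0
    rw [h0] at hπ
    simp only [sub_zero] at hπ
    obtain ⟨i0, hi0⟩ := π.surjective 0
    obtain ⟨i1, hi1⟩ := π.surjective 1
    have e0 := hπ i0; rw [hi0] at e0
    have e1 := hπ i1; rw [hi1] at e1
    have h2 : ((2:ℕ) : ZMod n) = 0 := by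
      push_cast
      linear_combination e1 - e0
    rw [ZMod.natCast_eq_zero_iff] at h2
    have := Nat.le_of_dvd (by norm_num) h2
    omega

lemma val_double {n : ℕ} [NeZero n] {h : ZMod n} (hh : h + h = 0) :
    (n:ℕ) ∣ 2 * h.val := by
  rw [← ZMod.natCast_eq_zero_iff]
  push_cast
  rw [ZMod.natCast_zmod_val, two_mul]
  exact hh

lemma htwo_odd {n : ℕ} [NeZero n] (hodd : Odd n) {h : ZMod n} (hh : h + h = 0) :
    h = 0 := by
  have hd := val_double hh
  have hcop : Nat.Coprime n 2 :=
    (Nat.coprime_comm.mp ((Nat.prime_two.coprime_iff_not_dvd).mpr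
      (by rw [Nat.odd_iff] at hodd; omega)))
  have := hcop.dvd_of_dvd_mul_left hd
  have hv := ZMod.val_lt h
  have : h.val = 0 := by
    rcases this with ⟨c, hc⟩
    rcases Nat.eq_zero_or_pos c with rfl | hc0
    · omega
    · have : n * 1 ≤ n * c := Nat.mul_le_mul_left n hc0
      omega
  exact (ZMod.val_eq_zero h).mp this

lemma htwo_even {n m : ℕ} [NeZero n] (hnm : n = 2*m) {h : ZMod n} (hh : h + h = 0)
    (h0 : h ≠ 0) : h = ((m:ℕ) : ZMod n) := by
  have hd := val_double hh
  have hv := ZMod.val_lt h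
  have hv0 : h.val ≠ 0 := fun hz => h0 ((ZMod.val_eq_zero h).mp hz)
  have hval : h.val = m := by
    rcases hd with ⟨c, hc⟩
    have hcases : c = 0 ∨ c = 1 ∨ 2 ≤ c := by omega
    rcases hcases with rfl | rfl | hc2
    · omega
    · omega
    · have : n * 2 ≤ n * c := Nat.mul_le_mul_left n hc2
      omega
  rw [← ZMod.natCast_zmod_val h, hval]

lemma bad_empty {n m : ℕ} [NeZero n] (hm : 0 < m) (hnm : n = 2*m) (k : ZMod n)
    (x : ZMod n) (hx : x + x = k) :
    IsEmpty {π : Equiv.Perm (ZMod n) // ∀ i, π i + π (i - ((m:ℕ):ZMod n)) = k} := by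
  constructor
  rintro ⟨π, hπ⟩
  obtain ⟨i, hi⟩ := π.surjective x
  have e := hπ i
  rw [hi] at e
  have h1 : π (i - (m:ℕ)) = x := by
    rw [← hx] at e
    exact add_left_cancel e
  have h2 := π.injective (h1.trans hi.symm)
  have h3 := sub_eq_self.mp h2
  have h4 := congrArg ZMod.val h3
  rw [valM hnm hm, ZMod.val_zero] at h4
  omega

lemma card_good_k {n m : ℕ} [NeZero n] (hm : 0 < m) (hnm : n = 2*m) :
    (Finset.univ.filter (fun k : ZMod n => ∀ x : ZMod n, x + x ≠ k)).card = m := by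
  have hiff : ∀ k : ZMod n, (∀ x : ZMod n, x + x ≠ k) ↔ ¬ 2 ∣ k.val := by
    intro k
    constructor
    · intro hP hdvd
      refine hP ((k.val / 2 : ℕ) : ZMod n) ?_
      rw [← Nat.cast_add, show k.val / 2 + k.val / 2 = k.val by omega,
        ZMod.natCast_zmod_val]
    · intro hnd x hx
      apply hnd
      have : k.val = (x.val + x.val) % n := by rw [← ZMod.val_add, hx]
      rw [this, Nat.dvd_mod_iff (by omega)]
      omega
  have h1 : (Finset.univ.filter (fun k : ZMod n => ∀ x : ZMod n, x + x ≠ k)).card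
      = ((Finset.range n).filter (fun j => ¬ 2 ∣ j)).card := by
    refine Finset.card_bij' (fun k _ => k.val) (fun j _ => ((j:ℕ) : ZMod n)) ?_ ?_ ?_ ?_
    · intro k hk
      simp only [Finset.mem_filter, Finset.mem_univ, true_and] at hk
      simp only [Finset.mem_filter, Finset.mem_range]
      exact ⟨ZMod.val_lt k, (hiff k).mp hk⟩
    · intro j hj
      simp only [Finset.mem_filter, Finset.mem_range] at hj
      simp only [Finset.mem_filter, Finset.mem_univ, true_and]
      rw [hiff, ZMod.val_cast_of_lt hj.1]
      exact hj.2
    · intro k _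
      exact ZMod.natCast_zmod_val k
    · intro j hj
      simp only [Finset.mem_filter, Finset.mem_range] at hj
      exact ZMod.val_cast_of_lt hj.1
  rw [h1]
  have h2 : ((Finset.range n).filter (fun j => ¬ 2 ∣ j))
      = ((Finset.range n).filter (fun j => 2 ∣ (j + 1))) := by
    apply Finset.filter_congr
    intro j _
    constructor <;> intro <;> omega
  rw [h2, Nat.card_multiples]
  omega


/-- Let `n ≥ 3`.  Then `Σ_{h ∈ ℤ/nℤ} Σ_{k ∈ ℤ/nℤ} |{π : ∀ i, π(i) + π(i - h) = k}|`
equals `0` if `n` is odd and equals `(n/2)·(n/2)!·2^{n/2}` if `n` is even. -/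
theorem stmt_11 (n : ℕ) (hn : 3 ≤ n) :
    haveI : NeZero n := ⟨by omega⟩
    (Odd n → ∑ h : ZMod n, ∑ k : ZMod n,
        Nat.card {π : Equiv.Perm (ZMod n) // ∀ i, π i + π (i - h) = k} = 0) ∧
    (Even n → ∑ h : ZMod n, ∑ k : ZMod n,
        Nat.card {π : Equiv.Perm (ZMod n) // ∀ i, π i + π (i - h) = k} =
          n / 2 * (n / 2).factorial * 2 ^ (n / 2)) := by
  haveI : NeZero n := ⟨by omega⟩
  constructor
  · intro hodd
    refine Finset.sum_eq_zero fun h _ => Finset.sum_eq_zero fun k _ => ?_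
    have he : IsEmpty {π : Equiv.Perm (ZMod n) // ∀ i, π i + π (i - h) = k} := by
      constructor
      rintro ⟨π, hπ⟩
      obtain ⟨hh, h0⟩ := nonempty_imp hn h k π hπ
      exact h0 (htwo_odd hodd hh)
    exact Nat.card_of_isEmpty
  · intro heven
    obtain ⟨m, hm⟩ := heven
    have hnm : n = 2 * m := by omega
    have hm2 : 2 ≤ m := by omega
    rw [Finset.sum_eq_single (((m:ℕ) : ZMod n))]
    · have hkey : ∀ k : ZMod n,
          Nat.card {π : Equiv.Perm (ZMod n) // ∀ i, π i + π (i - ((m:ℕ):ZMod n)) = k}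
            = if (∀ x : ZMod n, x + x ≠ k) then m.factorial * 2 ^ m else 0 := by
        intro k
        split
        · exact count_good hm2 hnm k ‹_›
        · rename_i hbad
          push_neg at hbad
          obtain ⟨x, hx⟩ := hbad
          haveI := bad_empty (by omega) hnm k x hx
          exact Nat.card_of_isEmpty
      rw [Finset.sum_congr rfl (fun k _ => hkey k)]
      rw [Finset.sum_ite, Finset.sum_const, Finset.sum_const_zero, add_zero,
        smul_eq_mul, card_good_k (by omega) hnm]
      have h2 : n / 2 = m := by omega
      rw [h2, mul_assoc]
    · intro h _ hne
      refine Finset.sum_eq_zero fun k _ => ?_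
      have he : IsEmpty {π : Equiv.Perm (ZMod n) // ∀ i, π i + π (i - h) = k} := by
        constructor
        rintro ⟨π, hπ⟩
        obtain ⟨hh, h0⟩ := nonempty_imp hn h k π hπ
        exact hne (htwo_even hnm hh h0)
      exact Nat.card_of_isEmpty
    · intro hmem
      exact absurd (Finset.mem_univ _) hmem
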